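/- Let k ≥ 1 and n = 4k+2, and let 0 < d_1 < ... < d_{2k+1} satisfy d_{|i|_n} + d_{|j|_n} ≥ d_{|i+j|_n} for all integers i, j. Define a distance on the 4k+2 points {A_0,...,A_{2k}, B_0,...,B_{2k}} by d(A_i,A_j) = d(B_i,B_j) = d_{|j-i|_{2k+1}} and d(A_i,B_j) = d_{2k+1-|j-i|_{2k+1}}. Then this distance satisfies the triangle inequality on every triple of distinct points. -/
import Mathlib


/-- `|i|_m = min over integers l of |i - l·m|`. -/
noncomputable def circAbs (m : ℕ) (i : ℤ) : ℤ :=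
  sInf {a : ℤ | ∃ l : ℤ, a = |i - l * (m : ℤ)|}


lemma circAbs_le (m : ℕ) (i l : ℤ) : circAbs m i ≤ |i - l * (m : ℤ)| :=
  csInf_le ⟨0, by rintro a ⟨l', rfl⟩; positivity⟩ ⟨l, rfl⟩

lemma circAbs_nonneg (m : ℕ) (i : ℤ) : 0 ≤ circAbs m i :=
  le_csInf ⟨|i|, 0, by simp⟩ (by rintro a ⟨l', rfl⟩; positivity)

lemma circAbs_spec (m : ℕ) (i : ℤ) :
    ∃ l : ℤ, circAbs m i = |i - l * (m : ℤ)| := by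
  have hne : Set.Nonempty {a : ℤ | ∃ l : ℤ, a = |i - l * (m : ℤ)|} := ⟨|i|, 0, by simp⟩
  have hbd : BddBelow {a : ℤ | ∃ l : ℤ, a = |i - l * (m : ℤ)|} :=
    ⟨0, by rintro a ⟨l', rfl⟩; positivity⟩
  exact Int.csInf_mem hne hbd

lemma two_circAbs_le (m : ℕ) (hm : 0 < m) (i : ℤ) : 2 * circAbs m i ≤ (m : ℤ) := by
  have hm' : (1:ℤ) ≤ (m:ℤ) := by exact_mod_cast hm
  obtain ⟨l, hl⟩ := circAbs_spec m i
  set b := i - l * (m : ℤ) with hb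
  have h1 : circAbs m i ≤ |b - m| := by
    have := circAbs_le m i (l + 1)
    rwa [show i - (l+1) * (m:ℤ) = b - m by rw [hb]; ring] at this
  have h2 : circAbs m i ≤ |b + m| := by
    have := circAbs_le m i (l - 1)
    rwa [show i - (l-1) * (m:ℤ) = b + m by rw [hb]; ring] at this
  rcases abs_cases b with ⟨ha, _⟩ | ⟨ha, _⟩ <;>
    rcases abs_cases (b - (m:ℤ)) with ⟨hx, _⟩ | ⟨hx, _⟩ <;>
      rcases abs_cases (b + (m:ℤ)) with ⟨hy, _⟩ | ⟨hy, _⟩ <;>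
        omega

lemma circAbs_eq_of {m : ℕ} {i a : ℤ} (l : ℤ)
    (h : i - l * m = a ∨ i - l * m = -a)
    (h0 : 0 ≤ a) (h2 : 2 * a ≤ (m : ℤ)) : circAbs m i = a := by
  apply le_antisymm
  · have hle := circAbs_le m i l
    rcases h with h | h <;> rw [h] at hle <;>
      simpa [abs_of_nonneg h0, abs_neg] using hle
  · have hne : Set.Nonempty {a : ℤ | ∃ l : ℤ, a = |i - l * (m : ℤ)|} := ⟨|i|, 0, by simp⟩
    apply le_csInf hne
    rintro x ⟨l', rfl⟩
    have key : i - l' * (m:ℤ) = (i - l * m) + (l - l') * m := by ring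
    have hc : (l - l') * (m:ℤ) ≤ -m ∨ (l - l') * (m:ℤ) = 0 ∨ (m:ℤ) ≤ (l - l') * m := by
      rcases lt_trichotomy (l - l') 0 with ht | ht | ht
      · left
        have h1 : (l - l') ≤ -1 := by omega
        have := mul_le_mul_of_nonneg_right h1 (by positivity : (0:ℤ) ≤ m)
        linarith
      · right; left; rw [ht]; ring
      · right; right
        have h1 : (1:ℤ) ≤ l - l' := by omega
        have := mul_le_mul_of_nonneg_right h1 (by positivity : (0:ℤ) ≤ m)
        linarith
    rw [key]
    rcases h with h | h <;> rw [h] <;>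
      generalize (l - l') * (m:ℤ) = c at hc <;>
        [rcases abs_cases (a + c) with ⟨hx, _⟩ | ⟨hx, _⟩;
         rcases abs_cases (-a + c) with ⟨hx, _⟩ | ⟨hx, _⟩] <;> omega

section Cases
variable (k : ℕ) (d : ℕ → ℝ)

lemma dmono_le (hmono : ∀ a b : ℕ, a < b → b ≤ 2 * k + 1 → d a < d b)
    {a b : ℕ} (hab : a ≤ b) (hb : b ≤ 2 * k + 1) : d a ≤ d b := by
  rcases eq_or_lt_of_le hab with rfl | h
  · exact le_rfl
  · exact (hmono a b h hb).le

/-- Facts about the three circ-abs values of a difference triple. -/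
lemma m_facts (δ1 δ2 : ℤ) :
    0 ≤ circAbs (2*k+1) δ1 ∧ 2 * circAbs (2*k+1) δ1 ≤ 2*(k:ℤ)+1 ∧
    0 ≤ circAbs (2*k+1) δ2 ∧ 2 * circAbs (2*k+1) δ2 ≤ 2*(k:ℤ)+1 ∧
    0 ≤ circAbs (2*k+1) (δ1+δ2) ∧ 2 * circAbs (2*k+1) (δ1+δ2) ≤ 2*(k:ℤ)+1 ∧
    circAbs (2*k+1) (δ1+δ2) ≤ circAbs (2*k+1) δ1 + circAbs (2*k+1) δ2 ∧
    circAbs (2*k+1) δ1 ≤ circAbs (2*k+1) δ2 + circAbs (2*k+1) (δ1+δ2) ∧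
    circAbs (2*k+1) δ2 ≤ circAbs (2*k+1) δ1 + circAbs (2*k+1) (δ1+δ2) := by
  obtain ⟨l1, h1⟩ := circAbs_spec (2*k+1) δ1
  obtain ⟨l2, h2⟩ := circAbs_spec (2*k+1) δ2
  obtain ⟨l3, h3⟩ := circAbs_spec (2*k+1) (δ1+δ2)
  have c1 : 2 * circAbs (2*k+1) δ1 ≤ ((2*k+1 : ℕ) : ℤ) := two_circAbs_le _ (by omega) _
  have c2 : 2 * circAbs (2*k+1) δ2 ≤ ((2*k+1 : ℕ) : ℤ) := two_circAbs_le _ (by omega) _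
  have c3 : 2 * circAbs (2*k+1) (δ1+δ2) ≤ ((2*k+1 : ℕ) : ℤ) := two_circAbs_le _ (by omega) _
  have t3 : circAbs (2*k+1) (δ1+δ2) ≤ circAbs (2*k+1) δ1 + circAbs (2*k+1) δ2 := by
    have := circAbs_le (2*k+1) (δ1+δ2) (l1 + l2)
    calc circAbs (2*k+1) (δ1+δ2) ≤ |(δ1+δ2) - (l1+l2) * ((2*k+1:ℕ):ℤ)| := this
      _ = |(δ1 - l1 * ((2*k+1:ℕ):ℤ)) + (δ2 - l2 * ((2*k+1:ℕ):ℤ))| := by ring_nf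
      _ ≤ |δ1 - l1 * ((2*k+1:ℕ):ℤ)| + |δ2 - l2 * ((2*k+1:ℕ):ℤ)| := abs_add_le _ _
      _ = circAbs (2*k+1) δ1 + circAbs (2*k+1) δ2 := by rw [← h1, ← h2]
  have t1 : circAbs (2*k+1) δ1 ≤ circAbs (2*k+1) δ2 + circAbs (2*k+1) (δ1+δ2) := by
    have := circAbs_le (2*k+1) δ1 (l3 - l2)
    calc circAbs (2*k+1) δ1 ≤ |δ1 - (l3 - l2) * ((2*k+1:ℕ):ℤ)| := this
      _ = |((δ1+δ2) - l3 * ((2*k+1:ℕ):ℤ)) - (δ2 - l2 * ((2*k+1:ℕ):ℤ))| := by ring_nf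
      _ ≤ |(δ1+δ2) - l3 * ((2*k+1:ℕ):ℤ)| + |δ2 - l2 * ((2*k+1:ℕ):ℤ)| := abs_sub _ _
      _ = circAbs (2*k+1) (δ1+δ2) + circAbs (2*k+1) δ2 := by rw [← h3, ← h2]
      _ = _ := by ring
  have t2 : circAbs (2*k+1) δ2 ≤ circAbs (2*k+1) δ1 + circAbs (2*k+1) (δ1+δ2) := by
    have := circAbs_le (2*k+1) δ2 (l3 - l1)
    calc circAbs (2*k+1) δ2 ≤ |δ2 - (l3 - l1) * ((2*k+1:ℕ):ℤ)| := this
      _ = |((δ1+δ2) - l3 * ((2*k+1:ℕ):ℤ)) - (δ1 - l1 * ((2*k+1:ℕ):ℤ))| := by ring_nf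
      _ ≤ |(δ1+δ2) - l3 * ((2*k+1:ℕ):ℤ)| + |δ1 - l1 * ((2*k+1:ℕ):ℤ)| := abs_sub _ _
      _ = circAbs (2*k+1) (δ1+δ2) + circAbs (2*k+1) δ1 := by rw [← h3, ← h1]
      _ = _ := by ring
  refine ⟨circAbs_nonneg _ _, by push_cast at c1 ⊢; omega, circAbs_nonneg _ _,
    by push_cast at c2 ⊢; omega, circAbs_nonneg _ _, by push_cast at c3 ⊢; omega, t3, t1, t2⟩

end Cases

section Main
variable (k : ℕ) (d : ℕ → ℝ)

lemma case_sss (hk : 1 ≤ k) (hd0 : d 0 = 0)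
    (hmono : ∀ a b : ℕ, a < b → b ≤ 2 * k + 1 → d a < d b)
    (hcirc : ∀ i j : ℤ,
      d (circAbs (4 * k + 2) i).toNat + d (circAbs (4 * k + 2) j).toNat
        ≥ d (circAbs (4 * k + 2) (i + j)).toNat) (δ1 δ2 : ℤ) :
    d (circAbs (2*k+1) δ1).toNat + d (circAbs (2*k+1) δ2).toNat
      ≥ d (circAbs (2*k+1) (δ1+δ2)).toNat := by
  obtain ⟨n1, b1, n2, b2, n3, b3, t3, t1, t2⟩ := m_facts k δ1 δ2
  set m1 := circAbs (2*k+1) δ1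
  set m2 := circAbs (2*k+1) δ2
  set m3 := circAbs (2*k+1) (δ1+δ2)
  have H := hcirc m1 m2
  have e1 : circAbs (4*k+2) m1 = m1 :=
    circAbs_eq_of 0 (Or.inl (by push_cast; ring)) n1 (by push_cast; omega)
  have e2 : circAbs (4*k+2) m2 = m2 :=
    circAbs_eq_of 0 (Or.inl (by push_cast; ring)) n2 (by push_cast; omega)
  have e3 : circAbs (4*k+2) (m1 + m2) = m1 + m2 :=
    circAbs_eq_of 0 (Or.inl (by push_cast; ring)) (by omega) (by push_cast; omega)
  rw [e1, e2, e3] at H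
  have hle : d m3.toNat ≤ d (m1 + m2).toNat :=
    dmono_le k d hmono (by omega) (by omega)
  linarith [H]

lemma case_scc (hk : 1 ≤ k) (hd0 : d 0 = 0)
    (hmono : ∀ a b : ℕ, a < b → b ≤ 2 * k + 1 → d a < d b)
    (hcirc : ∀ i j : ℤ,
      d (circAbs (4 * k + 2) i).toNat + d (circAbs (4 * k + 2) j).toNat
        ≥ d (circAbs (4 * k + 2) (i + j)).toNat) (δ1 δ2 : ℤ) :
    d (circAbs (2*k+1) δ1).toNat + d (2*k+1 - (circAbs (2*k+1) δ2).toNat)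
      ≥ d (2*k+1 - (circAbs (2*k+1) (δ1+δ2)).toNat) := by
  obtain ⟨n1, b1, n2, b2, n3, b3, t3, t1, t2⟩ := m_facts k δ1 δ2
  set m1 := circAbs (2*k+1) δ1
  set m2 := circAbs (2*k+1) δ2
  set m3 := circAbs (2*k+1) (δ1+δ2)
  have H := hcirc m1 (2*(k:ℤ)+1 - m2)
  have e1 : circAbs (4*k+2) m1 = m1 :=
    circAbs_eq_of 0 (Or.inl (by push_cast; ring)) n1 (by push_cast; omega)
  have e2 : circAbs (4*k+2) (2*(k:ℤ)+1 - m2) = 2*(k:ℤ)+1 - m2 :=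
    circAbs_eq_of 0 (Or.inl (by push_cast; ring)) (by omega) (by push_cast; omega)
  rw [e1, e2] at H
  rcases le_total m1 m2 with hc | hc
  · have e3 : circAbs (4*k+2) (m1 + (2*(k:ℤ)+1 - m2)) = 2*(k:ℤ)+1 - (m2 - m1) :=
      circAbs_eq_of 0 (Or.inl (by push_cast; ring)) (by omega) (by push_cast; omega)
    rw [e3] at H
    have hle : d (2*k+1 - m3.toNat) ≤ d (2*(k:ℤ)+1 - (m2 - m1)).toNat :=
      dmono_le k d hmono (by omega) (by omega)
    have hn : (2*(k:ℤ)+1 - m2).toNat = 2*k+1 - m2.toNat := by omega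
    rw [hn] at H
    linarith [H]
  · have e3 : circAbs (4*k+2) (m1 + (2*(k:ℤ)+1 - m2)) = 2*(k:ℤ)+1 - (m1 - m2) :=
      circAbs_eq_of 1 (Or.inr (by push_cast; ring)) (by omega) (by push_cast; omega)
    rw [e3] at H
    have hle : d (2*k+1 - m3.toNat) ≤ d (2*(k:ℤ)+1 - (m1 - m2)).toNat :=
      dmono_le k d hmono (by omega) (by omega)
    have hn : (2*(k:ℤ)+1 - m2).toNat = 2*k+1 - m2.toNat := by omega
    rw [hn] at H
    linarith [H]

lemma case_csc (hk : 1 ≤ k) (hd0 : d 0 = 0)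
    (hmono : ∀ a b : ℕ, a < b → b ≤ 2 * k + 1 → d a < d b)
    (hcirc : ∀ i j : ℤ,
      d (circAbs (4 * k + 2) i).toNat + d (circAbs (4 * k + 2) j).toNat
        ≥ d (circAbs (4 * k + 2) (i + j)).toNat) (δ1 δ2 : ℤ) :
    d (2*k+1 - (circAbs (2*k+1) δ1).toNat) + d (circAbs (2*k+1) δ2).toNat
      ≥ d (2*k+1 - (circAbs (2*k+1) (δ1+δ2)).toNat) := by
  obtain ⟨n1, b1, n2, b2, n3, b3, t3, t1, t2⟩ := m_facts k δ1 δ2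
  set m1 := circAbs (2*k+1) δ1
  set m2 := circAbs (2*k+1) δ2
  set m3 := circAbs (2*k+1) (δ1+δ2)
  have H := hcirc (2*(k:ℤ)+1 - m1) m2
  have e1 : circAbs (4*k+2) (2*(k:ℤ)+1 - m1) = 2*(k:ℤ)+1 - m1 :=
    circAbs_eq_of 0 (Or.inl (by push_cast; ring)) (by omega) (by push_cast; omega)
  have e2 : circAbs (4*k+2) m2 = m2 :=
    circAbs_eq_of 0 (Or.inl (by push_cast; ring)) n2 (by push_cast; omega)
  rw [e1, e2] at H
  rcases le_total m1 m2 with hc | hc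
  · have e3 : circAbs (4*k+2) ((2*(k:ℤ)+1 - m1) + m2) = 2*(k:ℤ)+1 - (m2 - m1) :=
      circAbs_eq_of 1 (Or.inr (by push_cast; ring)) (by omega) (by push_cast; omega)
    rw [e3] at H
    have hle : d (2*k+1 - m3.toNat) ≤ d (2*(k:ℤ)+1 - (m2 - m1)).toNat :=
      dmono_le k d hmono (by omega) (by omega)
    have hn : (2*(k:ℤ)+1 - m1).toNat = 2*k+1 - m1.toNat := by omega
    rw [hn] at H
    linarith [H]
  · have e3 : circAbs (4*k+2) ((2*(k:ℤ)+1 - m1) + m2) = 2*(k:ℤ)+1 - (m1 - m2) :=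
      circAbs_eq_of 0 (Or.inl (by push_cast; ring)) (by omega) (by push_cast; omega)
    rw [e3] at H
    have hle : d (2*k+1 - m3.toNat) ≤ d (2*(k:ℤ)+1 - (m1 - m2)).toNat :=
      dmono_le k d hmono (by omega) (by omega)
    have hn : (2*(k:ℤ)+1 - m1).toNat = 2*k+1 - m1.toNat := by omega
    rw [hn] at H
    linarith [H]

lemma case_ccs (hk : 1 ≤ k) (hd0 : d 0 = 0)
    (hmono : ∀ a b : ℕ, a < b → b ≤ 2 * k + 1 → d a < d b)
    (hcirc : ∀ i j : ℤ,
      d (circAbs (4 * k + 2) i).toNat + d (circAbs (4 * k + 2) j).toNat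
        ≥ d (circAbs (4 * k + 2) (i + j)).toNat) (δ1 δ2 : ℤ) :
    d (2*k+1 - (circAbs (2*k+1) δ1).toNat) + d (2*k+1 - (circAbs (2*k+1) δ2).toNat)
      ≥ d (circAbs (2*k+1) (δ1+δ2)).toNat := by
  obtain ⟨n1, b1, n2, b2, n3, b3, t3, t1, t2⟩ := m_facts k δ1 δ2
  set m1 := circAbs (2*k+1) δ1
  set m2 := circAbs (2*k+1) δ2
  set m3 := circAbs (2*k+1) (δ1+δ2)
  have H := hcirc (2*(k:ℤ)+1 - m1) (2*(k:ℤ)+1 - m2)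
  have e1 : circAbs (4*k+2) (2*(k:ℤ)+1 - m1) = 2*(k:ℤ)+1 - m1 :=
    circAbs_eq_of 0 (Or.inl (by push_cast; ring)) (by omega) (by push_cast; omega)
  have e2 : circAbs (4*k+2) (2*(k:ℤ)+1 - m2) = 2*(k:ℤ)+1 - m2 :=
    circAbs_eq_of 0 (Or.inl (by push_cast; ring)) (by omega) (by push_cast; omega)
  have e3 : circAbs (4*k+2) ((2*(k:ℤ)+1 - m1) + (2*(k:ℤ)+1 - m2)) = m1 + m2 :=
    circAbs_eq_of 1 (Or.inr (by push_cast; ring)) (by omega) (by push_cast; omega)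
  rw [e1, e2, e3] at H
  have hle : d m3.toNat ≤ d (m1 + m2).toNat :=
    dmono_le k d hmono (by omega) (by omega)
  have hn1 : (2*(k:ℤ)+1 - m1).toNat = 2*k+1 - m1.toNat := by omega
  have hn2 : (2*(k:ℤ)+1 - m2).toNat = 2*k+1 - m2.toNat := by omega
  rw [hn1, hn2] at H
  linarith [H]

end Main

/-- Mutant construction for `n = 4k+2`: two `2k+1`-gons `A`, `B` (encoded as
`Bool × Fin (2k+1)`) with `d(A_i,A_j) = d(B_i,B_j) = d_{|j-i|_{2k+1}}` and
`d(A_i,B_j) = d_{2k+1-|j-i|_{2k+1}}`.  If `0 < d_1 < ... < d_{2k+1}` satisfy the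
circular triangle inequality `d_{|i|_n} + d_{|j|_n} ≥ d_{|i+j|_n}` (with `d_0 = 0`),
then this distance satisfies the triangle inequality on every triple of distinct
points. -/
theorem mutant_4k2_triangle (k : ℕ) (hk : 1 ≤ k) (d : ℕ → ℝ)
    (hd0 : d 0 = 0)
    (hmono : ∀ a b : ℕ, a < b → b ≤ 2 * k + 1 → d a < d b)
    (hcirc : ∀ i j : ℤ,
      d (circAbs (4 * k + 2) i).toNat + d (circAbs (4 * k + 2) j).toNat
        ≥ d (circAbs (4 * k + 2) (i + j)).toNat) :
    ∀ x y z : Bool × Fin (2 * k + 1), x ≠ y → y ≠ z → z ≠ x →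
      (fun u v : Bool × Fin (2 * k + 1) =>
          if u.1 = v.1 then d (circAbs (2 * k + 1) ((v.2 : ℤ) - (u.2 : ℤ))).toNat
          else d (2 * k + 1 - (circAbs (2 * k + 1) ((v.2 : ℤ) - (u.2 : ℤ))).toNat)) x y
        + (fun u v : Bool × Fin (2 * k + 1) =>
          if u.1 = v.1 then d (circAbs (2 * k + 1) ((v.2 : ℤ) - (u.2 : ℤ))).toNat
          else d (2 * k + 1 - (circAbs (2 * k + 1) ((v.2 : ℤ) - (u.2 : ℤ))).toNat)) y z
        ≥ (fun u v : Bool × Fin (2 * k + 1) =>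
          if u.1 = v.1 then d (circAbs (2 * k + 1) ((v.2 : ℤ) - (u.2 : ℤ))).toNat
          else d (2 * k + 1 - (circAbs (2 * k + 1) ((v.2 : ℤ) - (u.2 : ℤ))).toNat)) x z := by
  rintro ⟨x1, x2⟩ ⟨y1, y2⟩ ⟨z1, z2⟩ _ _ _
  simp only
  have hsum : (z2 : ℤ) - (x2 : ℤ) = ((y2 : ℤ) - (x2 : ℤ)) + ((z2 : ℤ) - (y2 : ℤ)) := by ring
  rw [hsum]
  by_cases h1 : x1 = y1 <;> by_cases h2 : y1 = z1
  · have h3 : x1 = z1 := h1.trans h2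
    rw [if_pos h1, if_pos h2, if_pos h3]
    exact case_sss k d hk hd0 hmono hcirc _ _
  · have h3 : ¬ x1 = z1 := fun h => h2 (h1.symm.trans h)
    rw [if_pos h1, if_neg h2, if_neg h3]
    exact case_scc k d hk hd0 hmono hcirc _ _
  · have h3 : ¬ x1 = z1 := fun h => h1 (h.trans h2.symm)
    rw [if_neg h1, if_pos h2, if_neg h3]
    exact case_csc k d hk hd0 hmono hcirc _ _
  · have h3 : x1 = z1 := by
      cases x1 <;> cases y1 <;> cases z1 <;> simp_all
    rw [if_neg h1, if_neg h2, if_pos h3]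
    exact case_ccs k d hk hd0 hmono hcirc _ _
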